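/- Let φ_4 : {0,1,2,3} → ℝ be given by φ_4(0) = 0, φ_4(1) = 1, φ_4(2) = 8/5, φ_4(3) = 1. Then for every f : ℤ_4 → [0,∞), with Fourier coefficients a_k = (1/4)∑_{x=0}^{3} f(x)·e^{−2πikx/4}, one has (1/4)∑_{x=0}^{3} f(x)² log(f(x)²) − ((1/4)∑_x f(x)²)·log((1/4)∑_x f(x)²) ≤ 2·∑_{k=0}^{3} φ_4(k)·|a_k|², with the convention y·log(y) = 0 at y = 0. -/

import Mathlib

open scoped BigOperators

/-- Fourier coefficient `a_k = (1/n) ∑_x f(x) e^{-2πikx/n}` of a real function. -/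
noncomputable def fcoeffR (n : ℕ) (f : Fin n → ℝ) (k : Fin n) : ℂ :=
  (1 / n : ℂ) * ∑ x : Fin n, (f x : ℂ) *
    Complex.exp (-(2 * Real.pi * Complex.I * (k.val : ℂ) * (x.val : ℂ)) / n)

/-- The modified weight `φ_4 = (0, 1, 8/5, 1)` on `ℤ_4`. -/
noncomputable def phi4 : Fin 4 → ℝ := ![0, 1, 8/5, 1]

/-!
Write `a, b, c, d` for the values of `f`. Conditioning on the cosets of `{0, 2}` splits the
entropy of `f²` on `ℤ_4` into the mean of the two-point entropies of `(a², c²)` and `(b², d²)`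
plus the two-point entropy of the coset means `(X², Y²)`, where `X = √((a² + c²)/2)` and
`Y = √((b² + d²)/2)`.
The coset means satisfy Gross's two-point inequality `Ent ≤ (X - Y)²/2`, while on each coset we
use the sharpened two-point inequality
  `Ent(a², c²) ≤ (a - c)²/2 - 8/3 (√((a² + c²)/2) - (a + c)/2)²`;
the deficits `X - (a + c)/2`, `Y - (b + d)/2` pay for replacing `(X - Y)²/2` by `4/5` of the
squared difference of the coset averages, which is the `8/5` weight at frequency `2`.
By homogeneity the sharpened inequality reduces to `a = 1 + e`, `c = 1 - e` with `0 ≤ e ≤ 1`,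
where Taylor bounds for `log` and `√` turn it into a polynomial inequality.
-/

open Real Finset

lemma sum_pow_div_le_neg_log_one_sub {y : ℝ} (h0 : 0 ≤ y) (h1 : y < 1) (n : ℕ) :
    ∑ i ∈ range n, y ^ (i + 1) / (i + 1) ≤ -log (1 - y) :=
  sum_le_hasSum _ (fun i _ => by positivity)
    (hasSum_pow_div_log_of_abs_lt_one (by rwa [abs_of_nonneg h0]))

lemma neg_log_one_sub_le_sum_add {y : ℝ} (h0 : 0 ≤ y) (h1 : y < 1) (n : ℕ) :
    -log (1 - y) ≤ ∑ i ∈ range n, y ^ (i + 1) / (i + 1) + y ^ (n + 1) / (1 - y) := by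
  have h := abs_log_sub_add_sum_range_le (by rwa [abs_of_nonneg h0]) n
  rw [abs_of_nonneg h0] at h
  linarith [(abs_le.mp h).1]

lemma one_add_pow_mul_sum_pow_div {x : ℝ} (hx : 1 + x ≠ 0) (n : ℕ) :
    (1 + x) ^ n * ∑ i ∈ range n, (x / (1 + x)) ^ (i + 1) / (i + 1)
      = ∑ i ∈ range n, x ^ (i + 1) * (1 + x) ^ (n - 1 - i) / (i + 1) := by
  rw [mul_sum]
  refine sum_congr rfl fun i hi => ?_
  have hn : n = (i + 1) + (n - 1 - i) := by have := mem_range.mp hi; omega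
  conv_lhs => rw [hn, pow_add, div_pow]
  field_simp

lemma log_one_add_eq_neg_log_one_sub {x : ℝ} (hx : 1 + x ≠ 0) :
    log (1 + x) = -log (1 - x / (1 + x)) := by
  rw [show 1 - x / (1 + x) = (1 + x)⁻¹ by field_simp; ring, log_inv, neg_neg]

lemma sum_le_pow_mul_log_one_add {x : ℝ} (hx : 0 ≤ x) (n : ℕ) :
    ∑ i ∈ range n, x ^ (i + 1) * (1 + x) ^ (n - 1 - i) / (i + 1)
      ≤ (1 + x) ^ n * log (1 + x) := by
  rw [← one_add_pow_mul_sum_pow_div (by positivity),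
    log_one_add_eq_neg_log_one_sub (by positivity)]
  exact mul_le_mul_of_nonneg_left
    (sum_pow_div_le_neg_log_one_sub (by positivity)
      (by rw [div_lt_one (by positivity)]; linarith) n)
    (by positivity)

lemma pow_mul_log_one_add_le {x : ℝ} (hx : 0 ≤ x) (n : ℕ) :
    (1 + x) ^ n * log (1 + x)
      ≤ ∑ i ∈ range n, x ^ (i + 1) * (1 + x) ^ (n - 1 - i) / (i + 1) + x ^ (n + 1) := by
  have hpos : 0 < 1 + x := by positivity
  have hrem : (1 + x) ^ n * ((x / (1 + x)) ^ (n + 1) / (1 - x / (1 + x))) = x ^ (n + 1) := by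
    rw [one_sub_div hpos.ne', add_sub_cancel_right, div_pow, pow_succ (1 + x)]
    field_simp
  rw [← one_add_pow_mul_sum_pow_div hpos.ne', ← hrem, ← mul_add,
    log_one_add_eq_neg_log_one_sub hpos.ne']
  exact mul_le_mul_of_nonneg_left
    (neg_log_one_sub_le_sum_add (by positivity) (by rw [div_lt_one hpos]; linarith) n)
    (by positivity)

lemma taylor_le_sqrt_one_add {x : ℝ} (h0 : 0 ≤ x) (h1 : x ≤ 1) :
    1 + x / 2 - x ^ 2 / 8 + x ^ 3 / 16 - 5 * x ^ 4 / 128 ≤ √(1 + x) := by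
  refine le_sqrt_of_sq_le ?_
  nlinarith [pow_nonneg h0 5, mul_nonneg (pow_nonneg h0 5) (sub_nonneg.2 h1),
    mul_nonneg (pow_nonneg h0 6) (sub_nonneg.2 h1), mul_nonneg (pow_nonneg h0 7) (sub_nonneg.2 h1)]

/-- The entropy `E[u log u] - E[u] log E[u]` of `(u, v)` under the uniform measure on two points. -/
noncomputable def twoPointEnt (u v : ℝ) : ℝ :=
  negMulLog ((u + v) / 2) - (negMulLog u + negMulLog v) / 2

lemma twoPointEnt_comm (u v : ℝ) : twoPointEnt u v = twoPointEnt v u := by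
  simp only [twoPointEnt, add_comm]

lemma twoPointEnt_mul (c u v : ℝ) : twoPointEnt (c * u) (c * v) = c * twoPointEnt u v := by
  simp only [twoPointEnt, ← mul_add, mul_div_assoc, negMulLog_mul]
  ring

lemma twoPointEnt_one_add_sq_one_sub_sq_le {e : ℝ} (h0 : 0 ≤ e) (h1 : e ≤ 1) :
    twoPointEnt ((1 + e) ^ 2) ((1 - e) ^ 2) ≤ 2 * e ^ 2 - 8 / 3 * (√(1 + e ^ 2) - 1) ^ 2 := by
  have hEnt : twoPointEnt ((1 + e) ^ 2) ((1 - e) ^ 2)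
      = (1 + e) ^ 2 * log (1 + e) + (1 - e) ^ 2 * log (1 - e) - (1 + e ^ 2) * log (1 + e ^ 2) := by
    rw [twoPointEnt, show ((1 + e) ^ 2 + (1 - e) ^ 2) / 2 = 1 + e ^ 2 by ring]
    simp only [negMulLog, log_pow]
    push_cast
    ring
  have hA := pow_mul_log_one_add_le h0 8
  have hB :
      (1 - e) ^ 2 * log (1 - e) ≤ (1 - e) ^ 2 * -∑ i ∈ range 5, e ^ (i + 1) / (i + 1) := by
    rcases h1.lt_or_eq with h1 | rfl
    · exact mul_le_mul_of_nonneg_left (le_neg.2 (sum_pow_div_le_neg_log_one_sub h0 h1 5))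
        (sq_nonneg _)
    · simp
  have hC := sum_le_pow_mul_log_one_add (sq_nonneg e) 3
  have hS := taylor_le_sqrt_one_add (sq_nonneg e) (by nlinarith)
  have hs : √(1 + e ^ 2) ^ 2 = 1 + e ^ 2 := sq_sqrt (by positivity)
  norm_num [sum_range_succ] at hA hB hC
  -- The bounds reduce the claim to `0 ≤ e ^ 6 * Q e`; the inner polynomial has the partial sums
  -- of the coefficients of `Q` as coefficients (Abel summation), and they are all nonnegative.
  have hcert : 0 ≤ e ^ 6 * ((1 - e) * (1/30 + 103/210 * e + 75/28 * e ^ 2 + 311/42 * e ^ 3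
      + 4233/280 * e ^ 4 + 20233/840 * e ^ 5 + 13943/420 * e ^ 6 + 4454/105 * e ^ 7
      + 2733/56 * e ^ 8 + 2037/40 * e ^ 9 + 13127/280 * e ^ 10 + 2071/56 * e ^ 11
      + 10769/420 * e ^ 12 + 7003/420 * e ^ 13 + 10079/840 * e ^ 14 + 2949/280 * e ^ 15)
      + 1084/105 * e ^ 16) :=
    mul_nonneg (by positivity) (add_nonneg (mul_nonneg (sub_nonneg.2 h1) (by positivity))
      (by positivity))
  rw [hEnt,
    ← mul_le_mul_iff_of_pos_left (by positivity : 0 < (1 + e) ^ 8 * (1 + e ^ 2) ^ 3)]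
  linear_combination ((1 + e ^ 2) ^ 3 * (1 + e) ^ 2) * hA + ((1 + e) ^ 8 * (1 + e ^ 2) ^ 3) * hB
    + ((1 + e) ^ 8 * (1 + e ^ 2)) * hC + (16 / 3 * ((1 + e) ^ 8 * (1 + e ^ 2) ^ 3)) * hS
    + (8 / 3 * ((1 + e) ^ 8 * (1 + e ^ 2) ^ 3)) * hs + hcert

lemma twoPointEnt_sq_le {a c : ℝ} (ha : 0 ≤ a) (hc : 0 ≤ c) :
    twoPointEnt (a ^ 2) (c ^ 2)
      ≤ (a - c) ^ 2 / 2 - 8 / 3 * (√((a ^ 2 + c ^ 2) / 2) - (a + c) / 2) ^ 2 := by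
  wlog hca : c ≤ a generalizing a c
  · rw [twoPointEnt_comm, add_comm (a ^ 2), add_comm a]
    convert this hc ha (le_of_not_ge hca) using 3
    ring
  obtain ⟨σ, e, hσ, he0, he1, rfl, rfl⟩ :
      ∃ σ e : ℝ, 0 ≤ σ ∧ 0 ≤ e ∧ e ≤ 1 ∧ a = σ * (1 + e) ∧ c = σ * (1 - e) := by
    rcases (add_nonneg ha hc).eq_or_lt with h | h
    · exact ⟨0, 0, le_rfl, le_rfl, zero_le_one, by linarith, by linarith⟩
    · refine ⟨(a + c) / 2, (a - c) / (a + c), by positivity, div_nonneg (by linarith) h.le,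
        (div_le_one h).2 (by linarith), ?_, ?_⟩ <;> field_simp <;> ring
  rw [mul_pow, mul_pow, twoPointEnt_mul,
    show (σ ^ 2 * (1 + e) ^ 2 + σ ^ 2 * (1 - e) ^ 2) / 2 = σ ^ 2 * (1 + e ^ 2) by ring,
    sqrt_mul (sq_nonneg σ), sqrt_sq hσ]
  linear_combination σ ^ 2 * twoPointEnt_one_add_sq_one_sub_sq_le he0 he1

lemma twoPointEnt_sq_le_sq_sub {a c : ℝ} (ha : 0 ≤ a) (hc : 0 ≤ c) :
    twoPointEnt (a ^ 2) (c ^ 2) ≤ (a - c) ^ 2 / 2 :=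
  (twoPointEnt_sq_le ha hc).trans (sub_le_self _ (by positivity))

lemma entropy_fin_four_eq_twoPointEnt (u : Fin 4 → ℝ) :
    (1 / 4 : ℝ) * ∑ x, u x * log (u x)
        - ((1 / 4 : ℝ) * ∑ x, u x) * log ((1 / 4 : ℝ) * ∑ x, u x)
      = (twoPointEnt (u 0) (u 2) + twoPointEnt (u 1) (u 3)) / 2
        + twoPointEnt ((u 0 + u 2) / 2) ((u 1 + u 3) / 2) := by
  simp only [twoPointEnt, negMulLog, Fin.sum_univ_four]
  rw [show ((u 0 + u 2) / 2 + (u 1 + u 3) / 2) / 2 = 1 / 4 * (u 0 + u 1 + u 2 + u 3) by ring]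
  ring

lemma half_sq_sub_le {s t X Y : ℝ} (hX : s ≤ X) (hY : t ≤ Y) :
    (X - Y) ^ 2 / 2 ≤ 4 / 5 * (s - t) ^ 2 + 4 / 3 * ((X - s) ^ 2 + (Y - t) ^ 2) := by
  linear_combination (1 / 30) * sq_nonneg (3 * (s - t) - 5 * ((X - s) - (Y - t)))
    + (8 / 3) * mul_nonneg (sub_nonneg.2 hX) (sub_nonneg.2 hY)

open Complex in
lemma fcoeffR_four (f : Fin 4 → ℝ) (k : Fin 4) :
    fcoeffR 4 f k = (1 / 4) * ∑ x : Fin 4, (f x : ℂ) * (-I) ^ (k.val * x.val) := by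
  simp only [fcoeffR, ← exp_neg_pi_div_two_mul_I, ← Complex.exp_nat_mul]
  congr 1
  refine sum_congr rfl fun x _ => ?_
  push_cast
  congr 2
  ring

lemma two_mul_sum_phi4_mul_norm_fcoeffR_sq (f : Fin 4 → ℝ) :
    2 * ∑ k : Fin 4, phi4 k * ‖fcoeffR 4 f k‖ ^ 2
      = ((f 0 - f 2) ^ 2 + (f 1 - f 3) ^ 2) / 4 + (f 0 - f 1 + f 2 - f 3) ^ 2 / 5 := by
  simp only [Fin.sum_univ_four, fcoeffR_four, Complex.sq_norm]
  simp only [Complex.normSq_apply, phi4, Matrix.cons_val, Fin.coe_ofNat_eq_mod, Nat.reduceMod,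
    Nat.reduceMul, pow_zero, pow_succ, one_mul, mul_one, one_div, Complex.add_re, Complex.add_im,
    Complex.mul_re, Complex.mul_im, Complex.neg_re, Complex.neg_im, Complex.inv_re, Complex.inv_im,
    Complex.ofReal_re, Complex.ofReal_im, Complex.re_ofNat, Complex.im_ofNat, Complex.I_re,
    Complex.I_im]
  ring

theorem logSobolev_Z4_phi4 (f : Fin 4 → ℝ) (hf : ∀ x, 0 ≤ f x) :
    (1 / 4 : ℝ) * ∑ x : Fin 4, f x ^ 2 * Real.log (f x ^ 2)
      - ((1 / 4 : ℝ) * ∑ x : Fin 4, f x ^ 2) *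
        Real.log ((1 / 4 : ℝ) * ∑ x : Fin 4, f x ^ 2)
    ≤ 2 * ∑ k : Fin 4, phi4 k * ‖fcoeffR 4 f k‖ ^ 2 := by
  rw [two_mul_sum_phi4_mul_norm_fcoeffR_sq, entropy_fin_four_eq_twoPointEnt (f · ^ 2)]
  set X := √((f 0 ^ 2 + f 2 ^ 2) / 2)
  set Y := √((f 1 ^ 2 + f 3 ^ 2) / 2)
  have hX : (f 0 + f 2) / 2 ≤ X := le_sqrt_of_sq_le (by nlinarith [sq_nonneg (f 0 - f 2)])
  have hY : (f 1 + f 3) / 2 ≤ Y := le_sqrt_of_sq_le (by nlinarith [sq_nonneg (f 1 - f 3)])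
  have hXY := twoPointEnt_sq_le_sq_sub (a := X) (c := Y) (sqrt_nonneg _) (sqrt_nonneg _)
  rw [sq_sqrt (by positivity), sq_sqrt (by positivity)] at hXY
  linarith [twoPointEnt_sq_le (hf 0) (hf 2), twoPointEnt_sq_le (hf 1) (hf 3),
    half_sq_sub_le hX hY]
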